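/- The global function f_S of the sand automaton S is not injective, not F-injective, and not P-injective: there exist two distinct finite configurations with the same image under f_S, and two distinct periodic configurations with the same image under f_S. -/

import Mathlib

/-- The extended integers `ℤ ∪ {-∞, +∞}`. -/
abbrev EZ : Type := WithBot (WithTop ℤ)

/-- Embedding of `ℤ` into the extended integers. -/
def finVal (n : ℤ) : EZ := ((n : WithTop ℤ) : EZ)

/-- The integer value of a finite extended integer (`0` on `±∞`). -/
def valZ (x : EZ) : ℤ := WithBot.recBotCoe 0 (fun y => WithTop.recTopCoe 0 id y) x

/-- The measuring device `β_l^m`. -/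
noncomputable def beta (l : ℕ) (m : ℤ) (n : EZ) : EZ :=
  if finVal (m + (l : ℤ)) < n then ⊤
  else if n < finVal (m - (l : ℤ)) then ⊥
  else WithBot.map (WithTop.map (fun k => k - m)) n

/-- Reference height: the value of `x` if finite, `0` if `x = ±∞`. -/
def refH (x : EZ) : ℤ := if x = ⊥ ∨ x = ⊤ then 0 else valZ x

/-- One-dimensional sandpile configurations. -/
abbrev Config : Type := ℤ → EZ

/-- The neighborhood sequence `d_r^i(c)`: the `2r`-tuple of measured differences. -/
noncomputable def nbhd (r : ℕ) (c : Config) (i : ℤ) : Fin (2 * r) → EZ :=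
  fun j => beta r (refH (c i))
    (c (i + (if (j : ℕ) < r then ((j : ℕ) : ℤ) - (r : ℤ) else ((j : ℕ) : ℤ) - (r : ℤ) + 1)))

/-- The global function of the sand automaton of radius `r` with local rule `lam`. -/
noncomputable def globalF (r : ℕ) (lam : (Fin (2 * r) → EZ) → ℤ) (c : Config) : Config :=
  fun i => if c i = ⊥ ∨ c i = ⊤ then c i
    else finVal (valZ (c i) + lam (nbhd r c i))

/-- Finite configurations. -/
def FiniteConf (c : Config) : Prop := ∃ k : ℕ, ∀ i : ℤ, (k : ℤ) ≤ |i| → c i = finVal 0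

/-- Periodic configurations. -/
def PeriodicConf (c : Config) : Prop := ∃ p : ℤ, p ≠ 0 ∧ ∀ i : ℤ, c (i + p) = c i


/-- The local rule of the sand automaton `S`:
`λ_S(x,y) = +1` if `x = +∞ ∧ y ≠ -∞`, `-1` if `x ≠ +∞ ∧ y = -∞`, `0` otherwise. -/
def lamS (v : Fin 2 → EZ) : ℤ :=
  if v 0 = ⊤ ∧ v 1 ≠ ⊥ then 1
  else if v 0 ≠ ⊤ ∧ v 1 = ⊥ then -1
  else 0

/-!
`f_S` only moves a grain across a cliff of height at least two, so a single drop of height two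
is levelled in one step: both the finite configuration `…, 0, 1, -1, 0, …` and the periodic
configuration `…, -1, 1, -1, 1, …` are mapped to the flat configuration `0`, which is fixed.
-/

lemma finVal_ne_bot (n : ℤ) : finVal n ≠ ⊥ := by simp [finVal]

lemma finVal_ne_top (n : ℤ) : finVal n ≠ ⊤ := by simp [finVal]

lemma finVal_injective : Function.Injective finVal := by
  intro a b h
  simpa [finVal] using h

lemma valZ_finVal (n : ℤ) : valZ (finVal n) = n := rfl

lemma refH_finVal (n : ℤ) : refH (finVal n) = n := by
  simp [refH, finVal_ne_bot, finVal_ne_top, valZ_finVal]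

lemma finVal_lt_finVal {a b : ℤ} : finVal a < finVal b ↔ a < b := by simp [finVal]

lemma beta_finVal_eq_top_iff (l : ℕ) (m n : ℤ) : beta l m (finVal n) = ⊤ ↔ m + l < n := by
  simp only [beta, finVal_lt_finVal]
  split_ifs <;> simp_all [finVal]

lemma beta_finVal_eq_bot_iff (l : ℕ) (m n : ℤ) : beta l m (finVal n) = ⊥ ↔ n < m - l := by
  simp only [beta, finVal_lt_finVal]
  split_ifs <;> simp_all [finVal]
  omega

def ofHeights (g : ℤ → ℤ) : Config := fun i => finVal (g i)

/-- The move of `f_S` at a cell of height `m` whose neighbours have heights `a` (left) and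
`b` (right). -/
def stepS (a m b : ℤ) : ℤ :=
  if m + 1 < a ∧ ¬ b < m - 1 then 1 else if ¬ m + 1 < a ∧ b < m - 1 then -1 else 0

lemma globalF_lamS_ofHeights (g : ℤ → ℤ) :
    globalF 1 lamS (ofHeights g) =
      ofHeights fun i => g i + stepS (g (i - 1)) (g i) (g (i + 1)) := by
  funext i
  have h_left : nbhd 1 (ofHeights g) i 0 = beta 1 (g i) (finVal (g (i - 1))) := by
    simp [nbhd, ofHeights, refH_finVal, sub_eq_add_neg]
  have h_right : nbhd 1 (ofHeights g) i 1 = beta 1 (g i) (finVal (g (i + 1))) := by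
    simp [nbhd, ofHeights, refH_finVal]
  simp only [globalF, ofHeights, valZ_finVal, finVal_ne_bot, finVal_ne_top, or_self, if_false,
    lamS, ne_eq, h_left, h_right, beta_finVal_eq_top_iff, beta_finVal_eq_bot_iff, Nat.cast_one,
    stepS]

lemma globalF_lamS_ofHeights_eq_zero {g : ℤ → ℤ}
    (hg : ∀ i, g i + stepS (g (i - 1)) (g i) (g (i + 1)) = 0) :
    globalF 1 lamS (ofHeights g) = ofHeights 0 := by
  rw [globalF_lamS_ofHeights]
  exact congrArg ofHeights (funext hg)

lemma globalF_lamS_ofHeights_zero : globalF 1 lamS (ofHeights 0) = ofHeights 0 :=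
  globalF_lamS_ofHeights_eq_zero fun _ => by simp [stepS]

lemma ofHeights_injective : Function.Injective ofHeights :=
  fun _ _ h => funext fun i => finVal_injective (congrFun h i)

lemma finiteConf_ofHeights_zero : FiniteConf (ofHeights 0) := ⟨0, fun _ _ => rfl⟩

lemma periodicConf_ofHeights_zero : PeriodicConf (ofHeights 0) := ⟨1, one_ne_zero, fun _ => rfl⟩

def dipole (i : ℤ) : ℤ := if i = 0 then 1 else if i = 1 then -1 else 0

def alternating (i : ℤ) : ℤ := if i % 2 = 0 then -1 else 1

lemma finiteConf_ofHeights_dipole : FiniteConf (ofHeights dipole) := by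
  refine ⟨2, fun i hi => ?_⟩
  have h₀ : i ≠ 0 := by rintro rfl; norm_num at hi
  have h₁ : i ≠ 1 := by rintro rfl; norm_num at hi
  simp [ofHeights, dipole, h₀, h₁]

lemma periodicConf_ofHeights_alternating : PeriodicConf (ofHeights alternating) :=
  ⟨2, two_ne_zero, fun i => by simp [ofHeights, alternating, Int.add_emod_right]⟩

lemma globalF_lamS_ofHeights_dipole : globalF 1 lamS (ofHeights dipole) = ofHeights 0 := by
  refine globalF_lamS_ofHeights_eq_zero fun i => ?_
  rcases (by omega : i = 0 ∨ i = 1 ∨ i = -1 ∨ i = 2 ∨ i < -1 ∨ 2 < i) with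
    rfl | rfl | rfl | rfl | hi | hi
  all_goals simp [dipole, stepS]
  all_goals split_ifs <;> omega

lemma globalF_lamS_ofHeights_alternating :
    globalF 1 lamS (ofHeights alternating) = ofHeights 0 := by
  refine globalF_lamS_ofHeights_eq_zero fun i => ?_
  rcases Int.emod_two_eq i with h | h
  · have h_left : (i - 1) % 2 = 1 := by omega
    have h_right : (i + 1) % 2 = 1 := by omega
    norm_num [alternating, stepS, h, h_left, h_right]
  · have h_left : (i - 1) % 2 = 0 := by omega
    have h_right : (i + 1) % 2 = 0 := by omega
    norm_num [alternating, stepS, h, h_left, h_right]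

lemma exists_finiteConf_ne_globalF_lamS_eq : ∃ c c' : Config, c ≠ c' ∧ FiniteConf c ∧
    FiniteConf c' ∧ globalF 1 lamS c = globalF 1 lamS c' := by
  refine ⟨_, _, ofHeights_injective.ne ?_, finiteConf_ofHeights_dipole,
    finiteConf_ofHeights_zero,
    globalF_lamS_ofHeights_dipole.trans globalF_lamS_ofHeights_zero.symm⟩
  intro h
  simpa [dipole] using congrFun h 0

lemma exists_periodicConf_ne_globalF_lamS_eq : ∃ c c' : Config, c ≠ c' ∧ PeriodicConf c ∧
    PeriodicConf c' ∧ globalF 1 lamS c = globalF 1 lamS c' := by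
  refine ⟨_, _, ofHeights_injective.ne ?_, periodicConf_ofHeights_alternating,
    periodicConf_ofHeights_zero,
    globalF_lamS_ofHeights_alternating.trans globalF_lamS_ofHeights_zero.symm⟩
  intro h
  simpa [alternating] using congrFun h 0

/-- `f_S` is not injective, not `F`-injective and not `P`-injective: there are two
distinct finite configurations with the same image under `f_S`, and two distinct
periodic configurations with the same image under `f_S`. -/
theorem S_not_injective :
    ¬ Function.Injective (globalF 1 lamS) ∧
    ¬ Set.InjOn (globalF 1 lamS) {c : Config | FiniteConf c} ∧
    ¬ Set.InjOn (globalF 1 lamS) {c : Config | PeriodicConf c} ∧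
    (∃ c c' : Config, c ≠ c' ∧ FiniteConf c ∧ FiniteConf c' ∧
      globalF 1 lamS c = globalF 1 lamS c') ∧
    (∃ c c' : Config, c ≠ c' ∧ PeriodicConf c ∧ PeriodicConf c' ∧
      globalF 1 lamS c = globalF 1 lamS c') := by
  obtain ⟨c, c', hne, hc, hc', heq⟩ := exists_finiteConf_ne_globalF_lamS_eq
  obtain ⟨d, d', hne_d, hd, hd', heq_d⟩ := exists_periodicConf_ne_globalF_lamS_eq
  exact ⟨fun h => hne (h heq), fun h => hne (h hc hc' heq), fun h => hne_d (h hd hd' heq_d),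
    ⟨c, c', hne, hc, hc', heq⟩, ⟨d, d', hne_d, hd, hd', heq_d⟩⟩
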